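/- Fix α ∈ ℝ and let f^{jk}_l = 2α·ε^{jkl} be the su(2)-type structure constants on three indices. Define the matrix-valued function γ̃ on ℝ³ with entries γ̃^i_k(A) = δ^i_k − α·Σ_l ε^{ilk}·A_l + α²·A_i·A_k. Then γ̃ satisfies the first master equation of the linear Poisson gauge theory at every A ∈ ℝ³: Σ_i' (γ̃^j_{i'}(A)·∂^{i'}_A γ̃^k_l(A) − γ̃^k_{i'}(A)·∂^{i'}_A γ̃^j_l(A)) = Σ_{i'} γ̃^{i'}_l(A)·f^{jk}_{i'} for all j,k,l. -/

import Mathlib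

/-!
The entries of `γ̃` are polynomials of degree two in `A`, so `∂^i_A γ̃^k_l = -α ε^{kil} + α² (δ^k_i A_l + A_k δ^l_i)`
is explicit, and both sides of the master equation become polynomials of degree at most four in `A`.
Their equality is then a finite check over the indices `j, k, l`.
-/

/-- The totally antisymmetric Levi-Civita symbol on three indices with `ε^{123} = 1`
(here indices run over `Fin 3`, i.e. `ε 0 1 2 = 1`). -/
noncomputable def levicivita (i j k : Fin 3) : ℝ :=
  (((j : ℕ) : ℝ) - ((i : ℕ) : ℝ)) * (((k : ℕ) : ℝ) - ((j : ℕ) : ℝ))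
    * (((k : ℕ) : ℝ) - ((i : ℕ) : ℝ)) / 2

/-- Partial derivative with respect to the `i`-th coordinate of a real-valued function
of `A ∈ ℝ³`. -/
noncomputable def pd {N : ℕ} (i : Fin N) (g : (Fin N → ℝ) → ℝ) (A : Fin N → ℝ) : ℝ :=
  fderiv ℝ g A (Pi.single i 1)

theorem pd_const_sub_linear_add_mul {N : ℕ} (c α β : ℝ) (e : Fin N → ℝ) (i k l : Fin N)
    (A : Fin N → ℝ) :
    pd i (fun B => c - α * ∑ m, e m * B m + β * B k * B l) A
      = -(α * e i)
        + β * ((Pi.single i 1 : Fin N → ℝ) k * A l + A k * (Pi.single i 1 : Fin N → ℝ) l) := by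
  have hcoord (m : Fin N) : HasFDerivAt (fun B : Fin N → ℝ => B m)
      (ContinuousLinearMap.proj m : (Fin N → ℝ) →L[ℝ] ℝ) A := hasFDerivAt_apply m A
  have hlin := HasFDerivAt.fun_sum (u := Finset.univ) fun m _ => (hcoord m).const_mul (e m)
  have hquad := ((hcoord k).const_mul β).fun_mul (hcoord l)
  rw [pd, ((hlin.const_mul α).const_sub c |>.fun_add hquad).fderiv]
  simp only [add_apply, neg_apply, smul_apply, sum_apply, ContinuousLinearMap.proj_apply,
    Pi.single_apply, smul_eq_mul, mul_ite, mul_one, mul_zero, Finset.sum_ite_eq', Finset.mem_univ,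
    if_true, ite_mul, one_mul, zero_mul]
  split_ifs <;> ring

noncomputable def su2Gamma (α : ℝ) (A : Fin 3 → ℝ) (i k : Fin 3) : ℝ :=
  (if i = k then 1 else 0) - α * ∑ l, levicivita i l k * A l + α ^ 2 * A i * A k

theorem su2Gamma_first_master (α : ℝ) (A : Fin 3 → ℝ) (j k l : Fin 3) :
    ∑ i, (su2Gamma α A j i * pd i (fun B => su2Gamma α B k l) A
        - su2Gamma α A k i * pd i (fun B => su2Gamma α B j l) A)
      = ∑ i, su2Gamma α A i l * (2 * α * levicivita j k i) := by
  simp only [su2Gamma, pd_const_sub_linear_add_mul]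
  simp only [Fin.sum_univ_three]
  fin_cases j <;> fin_cases k <;> fin_cases l <;>
    simp only [Fin.reduceFinMk] <;> norm_num [levicivita, Pi.single_apply, Fin.ext_iff] <;> ring

/-- For the su(2)-type structure constants `f^{jk}_l = 2α ε^{jkl}`, the
matrix-valued function `γ̃^i_k(A) = δ^i_k − α Σ_l ε^{ilk} A_l + α² A_i A_k` satisfies the
first master equation `Σ_i (γ̃^j_i ∂^i_A γ̃^k_l − γ̃^k_i ∂^i_A γ̃^j_l) = Σ_i γ̃^i_l f^{jk}_i`
at every `A ∈ ℝ³`. -/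
theorem su2_alternative_gamma_first_master (α : ℝ)
    (f : Fin 3 → Fin 3 → Fin 3 → ℝ)
    (hf : ∀ j k l, f j k l = 2 * α * levicivita j k l)
    (γt : (Fin 3 → ℝ) → Fin 3 → Fin 3 → ℝ)
    (hγt : ∀ A i k, γt A i k = (if i = k then 1 else 0)
        - α * ∑ l, levicivita i l k * A l + α ^ 2 * A i * A k) :
    ∀ A : Fin 3 → ℝ, ∀ j k l,
      ∑ i, (γt A j i * pd i (fun B => γt B k l) A - γt A k i * pd i (fun B => γt B j l) A)
        = ∑ i, γt A i l * f j k i := by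
  obtain rfl : γt = su2Gamma α := funext fun A => funext fun i => funext (hγt A i)
  intro A j k l
  simpa only [hf] using su2Gamma_first_master α A j k l
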